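/- Let ω_1,…,ω_n be n ≥ 1 distinct complex numbers and let S = {α_1,…,α_s} be a finite subset of ℂ of cardinality s ≥ 1. Then for every n-tuple a = (a_1(T),…,a_n(T)) of non-zero polynomials in ℂ[T], one has |a_1|_∞⋯|a_n|_∞ · ∏_{j=1}^s ( ‖a‖_{α_j}^{-1} · |a_1|_{α_j}⋯|a_n|_{α_j} · |a·f|_{α_j} ) ≥ C(n)^{-s}, where f = (e^{ω_1 T},…,e^{ω_n T}) and C(n) = exp(n(n−1)/2). -/

import Mathlib

noncomputable section

namespace PGNF

open scoped Classical Pointwise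

variable {F : Type*} [Field F]

/-- The field `K_∞ = F((1/T))`, realized as the field of formal Laurent series
in the variable `X = 1/T`. -/
abbrev Kinf (F : Type*) [Field F] := LaurentSeries F

/-- The element `T ∈ K_∞`, i.e. `X⁻¹`. -/
def tK (F : Type*) [Field F] : LaurentSeries F := HahnSeries.single (-1 : ℤ) 1

/-- The absolute value on `K_∞`, given by `|f| = e^{deg f}` on `F[T]`;
in terms of the variable `X = 1/T` this is `|f| = e^{-ord_X(f)}`. -/
def absK (f : LaurentSeries F) : ℝ :=
  if f = 0 then 0 else Real.exp (-(f.order : ℝ))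

/-- The embedding of `A = F[T]` into `K_∞`, sending `T` to `X⁻¹`. -/
def pToK (p : Polynomial F) : LaurentSeries F := Polynomial.aeval (tK F) p

/-- Componentwise embedding of a vector of polynomials into `K_∞`-coordinates. -/
def mapToK {ι : Type*} (x : ι → Polynomial F) : ι → LaurentSeries F := fun i => pToK (x i)

/-- The maximum norm on `K_∞`-coordinate vectors. -/
def snorm {ι : Type*} [Fintype ι] (x : ι → LaurentSeries F) : ℝ := ⨆ i, absK (x i)

/-- The standard bilinear pairing `x·y = Σ x_i y_i` on `K_∞ⁿ`. -/
def dotK {n : ℕ} (x y : Fin n → LaurentSeries F) : LaurentSeries F := ∑ i, x i * y i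

/-- The leading coefficient of a Laurent series in `F((1/T))`
(the coefficient of the highest power of `T`). -/
def leadCoeff (f : LaurentSeries F) : F := f.coeff f.order

/-- A family of vectors is (topologically) orthogonal if the norm of every linear
combination is the maximum of the norms of its terms. -/
def OrthogonalFam {ι : Type*} [Fintype ι] {n : ℕ} (v : ι → Fin n → LaurentSeries F) : Prop :=
  ∀ c : ι → LaurentSeries F, snorm (∑ i, c i • v i) = ⨆ i, snorm (c i • v i)

/-- An orthogonal basis of `K_∞ⁿ`. -/
def IsOrthogonalBasis {n : ℕ} (v : Fin n → Fin n → LaurentSeries F) : Prop :=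
  OrthogonalFam v ∧ LinearIndependent (LaurentSeries F) v ∧
    Submodule.span (LaurentSeries F) (Set.range v) = ⊤

/-- An orthonormal family in `K_∞ⁿ`. -/
def OrthonormalFam {ι : Type*} [Fintype ι] {n : ℕ} (v : ι → Fin n → LaurentSeries F) : Prop :=
  OrthogonalFam v ∧ ∀ i, snorm (v i) = 1

/-- A basis of the `A`-module `Aⁿ`, where `A = F[T]`. -/
def IsABasis {n : ℕ} (x : Fin n → Fin n → Polynomial F) : Prop :=
  LinearIndependent (Polynomial F) x ∧ Submodule.span (Polynomial F) (Set.range x) = ⊤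

/-- The index set for the canonical basis of `⋀^m K_∞ⁿ`: subsets of `{1,…,n}` of size `m`. -/
abbrev SS (n m : ℕ) := {s : Finset (Fin n) // s.card = m}

/-- The `r`-th element (in increasing order) of `s`. -/
def sel {n m : ℕ} (s : SS n m) (r : Fin m) : Fin n := (s.1.orderIsoOfFin s.2 r : Fin n)

/-- The wedge product `v_1 ∧ ⋯ ∧ v_m` of `m` vectors of `K_∞ⁿ`, in Plücker coordinates
with respect to the canonical basis `(e_{i_1} ∧ ⋯ ∧ e_{i_m})_{i_1<⋯<i_m}` of `⋀^m K_∞ⁿ`. -/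
def wedge {n m : ℕ} (v : Fin m → Fin n → LaurentSeries F) : SS n m → LaurentSeries F :=
  fun s => Matrix.det (Matrix.of fun r r' => v r (sel s r'))

/-- The projective distance `dist(x,y) = ‖x∧y‖/(‖x‖‖y‖)` between two points of `K_∞ⁿ`. -/
def pdist {n : ℕ} (x y : Fin n → LaurentSeries F) : ℝ :=
  snorm (wedge ![x, y]) / (snorm x * snorm y)

/-- `L_{u,i}(q)`: the minimum of all `t ≥ 0` for which the solutions `x ∈ Aⁿ` of
`‖x‖ ≤ e^t` and `|u·x| ≤ e^{t-q}` span a subspace of `Kⁿ` of dimension at least `i`. -/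
def LL {n : ℕ} (u : Fin n → LaurentSeries F) (i : ℕ) (q : ℝ) : ℝ :=
  sInf {t : ℝ | 0 ≤ t ∧ ∃ x : Fin i → Fin n → Polynomial F,
    LinearIndependent (LaurentSeries F) (fun j => mapToK (x j)) ∧
    ∀ j, snorm (mapToK (x j)) ≤ Real.exp t ∧
      absK (dotK u (mapToK (x j))) ≤ Real.exp (t - q)}

/-- The map `L_u = (L_{u,1},…,L_{u,n})`. -/
def Lmap {n : ℕ} (u : Fin n → LaurentSeries F) : ℝ → Fin n → ℝ :=
  fun q i => LL u ((i : ℕ) + 1) q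

/-- An `n`-system on `[0,∞)`. -/
def IsNSystem {n : ℕ} (P : ℝ → Fin n → ℝ) : Prop :=
  ∀ q : ℝ, 0 ≤ q →
    ((∀ i, 0 ≤ P q i) ∧ (∀ i j : Fin n, i ≤ j → P q i ≤ P q j) ∧ ∑ i, P q i = q) ∧
    ∃ ε > 0, ∃ k ℓ : Fin n,
      (∀ t : ℝ, max 0 (q - ε) ≤ t → t ≤ q → P t = P q + (t - q) • (Pi.single ℓ 1 : Fin n → ℝ)) ∧
      (∀ t : ℝ, q ≤ t → t ≤ q + ε → P t = P q + (t - q) • (Pi.single k 1 : Fin n → ℝ)) ∧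
      (0 < q → ℓ < k → ∀ i : Fin n, ℓ ≤ i → i ≤ k → P q i = P q ℓ)

/-- The unit ball `O_∞^ι` of `K_∞^ι` for the maximum norm. -/
def stdBody (F : Type*) [Field F] (ι : Type*) : Set (ι → LaurentSeries F) :=
  {x | ∀ i, absK (x i) ≤ 1}

/-- The `i`-th minimum of a subset `C` of `K_∞^ι` with respect to the lattice `A^ι`:
the smallest `|ρ|`, `ρ ∈ K_∞^×`, such that `ρC` contains at least `i` elements of `A^ι`
that are linearly independent. -/
def ithMin {ι : Type*} [Fintype ι] (C : Set (ι → LaurentSeries F)) (i : ℕ) : ℝ :=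
  sInf {r : ℝ | ∃ ρ : LaurentSeries F, ρ ≠ 0 ∧ r = absK ρ ∧
    ∃ x : Fin i → ι → Polynomial F,
      LinearIndependent (LaurentSeries F) (fun j => mapToK (x j)) ∧
      ∀ j, mapToK (x j) ∈ ρ • C}

/-- The `m`-th compound body of `C ⊆ K_∞ⁿ`: the `O_∞`-submodule of `⋀^m K_∞ⁿ`
spanned by the products `v_1 ∧ ⋯ ∧ v_m` with `v_1,…,v_m ∈ C`. -/
def compound {n : ℕ} (C : Set (Fin n → LaurentSeries F)) (m : ℕ) :
    Submodule (PowerSeries F) (SS n m → LaurentSeries F) :=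
  Submodule.span (PowerSeries F)
    {ω | ∃ v : Fin m → Fin n → LaurentSeries F, (∀ r, v r ∈ C) ∧ ω = wedge v}

/-- `L^{(m)}_{u,j}(q)`, relative to the projection `π` of `⋀^m K_∞ⁿ` onto `W^{(m)}`:
the minimum of all `t ≥ 0` for which the solutions `ω ∈ ⋀^m Aⁿ` of `‖ω‖ ≤ e^t` and
`‖π(ω)‖ ≤ e^{t-q}` contain at least `j` linearly independent elements. -/
def Lm {n m : ℕ}
    (π : (SS n m → LaurentSeries F) →ₗ[LaurentSeries F] (SS n m → LaurentSeries F))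
    (j : ℕ) (q : ℝ) : ℝ :=
  sInf {t : ℝ | 0 ≤ t ∧ ∃ ω : Fin j → SS n m → Polynomial F,
    LinearIndependent (LaurentSeries F) (fun r => mapToK (ω r)) ∧
    ∀ r, snorm (mapToK (ω r)) ≤ Real.exp t ∧
      snorm (π (mapToK (ω r))) ≤ Real.exp (t - q)}

/-- The trajectory function `L_ω(q) = max{log‖ω‖, q + log‖π(ω)‖}` of a point
`ω ∈ ⋀^m Aⁿ` (with the convention `log 0 = -∞`, i.e. the second term is omitted
when `π(ω) = 0`). -/
def Lomega {n m : ℕ}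
    (π : (SS n m → LaurentSeries F) →ₗ[LaurentSeries F] (SS n m → LaurentSeries F))
    (ω : SS n m → Polynomial F) (q : ℝ) : ℝ :=
  if π (mapToK ω) = 0 then Real.log (snorm (mapToK ω))
  else max (Real.log (snorm (mapToK ω))) (q + Real.log (snorm (π (mapToK ω))))

/-- The map `Φ_n` listing the coordinates of a point of `ℝⁿ` in increasing order. -/
def PhiN {n : ℕ} (v : Fin n → ℝ) : Fin n → ℝ := v ∘ Tuple.sort v

/-- Deleting the `h`-th entry of an `(n+1)`-tuple and appending `u` at the end. -/
def delAppend {n : ℕ} {α : Type*} (x : Fin (n + 1) → α) (h : Fin (n + 1)) (u : α) :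
    Fin (n + 1) → α :=
  Fin.snoc (fun j : Fin n => x (h.succAbove j)) u

/-- The image in `K_∞ = F((1/T))` of a power series `f ∈ F[[X]] = F[[1/T]]`,
i.e. the series `f(1/T)`. -/
def psToK (f : PowerSeries F) : LaurentSeries F := HahnSeries.ofPowerSeries ℤ F f

/-- The pairing `a·f = Σ a_i f_i` of a polynomial vector with a vector of power series. -/
def dotPS {n : ℕ} (a : Fin n → Polynomial F) (f : Fin n → PowerSeries F) : PowerSeries F :=
  ∑ i, (a i : PowerSeries F) * f i

/-- `f` is normal for `(ρ_1,…,ρ_n)`: every nonzero `a ∈ Aⁿ` with `deg a_i ≤ ρ_i - 1`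
and `ord_0(a·f) ≥ ρ_1+⋯+ρ_n-1` satisfies `ord_0(a·f) = ρ_1+⋯+ρ_n-1`. -/
def IsNormalFor {n : ℕ} (f : Fin n → PowerSeries F) (ρ : Fin n → ℕ) : Prop :=
  ∀ a : Fin n → Polynomial F, a ≠ 0 → (∀ i, (a i).degree < (ρ i : ℕ)) →
    (((∑ i, ρ i) - 1 : ℕ) : ℕ∞) ≤ (dotPS a f).order →
    (dotPS a f).order = (((∑ i, ρ i) - 1 : ℕ) : ℕ∞)

/-- The series `e^{ω/T} = Σ_j (ω^j/j!) T^{-j} ∈ F[[1/T]] ⊆ K_∞` (char. zero). -/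
def expK (ω : F) : LaurentSeries F :=
  psToK (PowerSeries.mk fun j => ω ^ j / (j.factorial : F))

end PGNF

namespace PGNF

open scoped Classical Pointwise

/-- The polynomial `p(T)`, viewed as a power series in `S = T - α`. -/
def polyAt (p : Polynomial ℂ) (α : ℂ) : PowerSeries ℂ :=
  ((p.comp (Polynomial.X + Polynomial.C α) : Polynomial ℂ) : PowerSeries ℂ)

/-- The entire function `e^{ωT} = e^{ωα} Σ_j (ω^j/j!) (T-α)^j`, viewed as a power series
in `S = T - α`. -/
def expAt (ω α : ℂ) : PowerSeries ℂ :=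
  Complex.exp (ω * α) • PowerSeries.mk fun j => ω ^ j / (j.factorial : ℂ)

/-- The absolute value `|g|_α = e^{-ord_α(g)}` on `ℂ[[T-α]]` (with `|0|_α = 0`). -/
def absOrd (g : PowerSeries ℂ) : ℝ :=
  if g = 0 then 0 else Real.exp (-(g.order.toNat : ℝ))

end PGNF

/-!
The `k`-th derivative of `a_i e^{ω_i T}` is `(d/dT + ω_i)^k a_i · e^{ω_i T}`, so the Wronskian of
`a_1 e^{ω_1 T}, …, a_n e^{ω_n T}` is `e^{(ω_1 + ⋯ + ω_n) T} D` with the polynomial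
`D = det ((d/dT + ω_i)^k a_i)_{k,i}`. The coefficient of `T^{deg a_1 + ⋯ + deg a_n}` in `D` is
`lc(a_1) ⋯ lc(a_n)` times the Vandermonde determinant of the `ω_i`, so `D ≠ 0` and
`Σ_j ord_{α_j} D ≤ Σ_i deg a_i`.

At a point `α`, replace the column `i₀` of the Wronskian matrix by the sum of all columns, i.e. by
the derivatives of `a·f`. Since the `k`-th derivative lowers the order at `α` by at most `k`, every
term of the determinant has order at least `ord_α(a·f) + Σ_{i ≠ i₀} ord_α a_i - n(n-1)/2`, which
bounds `ord_α D` from below. With `i₀` minimising `ord_α a_i`, this says that the local factor at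
`α` is at least `e^{-ord_α D} C(n)^{-1}`; multiplying over `S` gives the theorem.
-/

namespace Polynomial

section CommSemiring

variable {R : Type*} [CommSemiring R]

lemma coeff_prod_of_natDegree_le_sum {ι : Type*} (s : Finset ι) (f : ι → R[X]) (d : ι → ℕ)
    (h : ∀ i ∈ s, (f i).natDegree ≤ d i) :
    (∏ i ∈ s, f i).coeff (∑ i ∈ s, d i) = ∏ i ∈ s, (f i).coeff (d i) := by
  induction s using Finset.cons_induction with
  | empty => simp
  | cons j s hj ih =>
    have hs : ∀ i ∈ s, (f i).natDegree ≤ d i := fun i hi => h i (Finset.mem_cons_of_mem hi)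
    rw [Finset.prod_cons, Finset.sum_cons, Finset.prod_cons,
      coeff_mul_add_eq_of_natDegree_le (h j (Finset.mem_cons_self j s))
        ((natDegree_prod_le _ _).trans (Finset.sum_le_sum hs)), ih hs]

def twistDeriv (c : R) (p : R[X]) : R[X] := derivative p + C c * p

lemma natDegree_iterate_twistDeriv_le (c : R) {p : R[X]} {d : ℕ} (hp : p.natDegree ≤ d)
    (k : ℕ) : ((twistDeriv c)^[k] p).natDegree ≤ d := by
  induction k with
  | zero => exact hp
  | succ k ih =>
    rw [Function.iterate_succ_apply', twistDeriv]
    exact natDegree_add_le_of_degree_le ((natDegree_derivative_le _).trans (by omega))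
      ((natDegree_C_mul_le _ _).trans ih)

lemma coeff_iterate_twistDeriv (c : R) {p : R[X]} {d : ℕ} (hp : p.natDegree ≤ d) (k : ℕ) :
    ((twistDeriv c)^[k] p).coeff d = c ^ k * p.coeff d := by
  induction k with
  | zero => simp
  | succ k ih =>
    have htop : ((twistDeriv c)^[k] p).coeff (d + 1) = 0 :=
      coeff_eq_zero_of_natDegree_lt
        ((natDegree_iterate_twistDeriv_le c hp k).trans_lt d.lt_succ_self)
    rw [Function.iterate_succ_apply', twistDeriv, coeff_add, coeff_derivative, htop, coeff_C_mul,
      ih, pow_succ']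
    ring

end CommSemiring

section CommRing

variable {R : Type*} [CommRing R]

lemma natDegree_det_le_of_col {ι : Type*} [Fintype ι] [DecidableEq ι] (M : Matrix ι ι R[X])
    (d : ι → ℕ) (h : ∀ k i, (M k i).natDegree ≤ d i) : M.det.natDegree ≤ ∑ i, d i := by
  rw [Matrix.det_apply']
  refine natDegree_sum_le_of_forall_le _ _ fun σ _ => natDegree_mul_le.trans ?_
  rw [natDegree_intCast, zero_add]
  exact (natDegree_prod_le _ _).trans (Finset.sum_le_sum fun i _ => h _ i)

lemma coeff_det_of_natDegree_le_col {ι : Type*} [Fintype ι] [DecidableEq ι]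
    (M : Matrix ι ι R[X]) (d : ι → ℕ) (h : ∀ k i, (M k i).natDegree ≤ d i) :
    M.det.coeff (∑ i, d i) = (Matrix.of fun k i => (M k i).coeff (d i)).det := by
  simp only [Matrix.det_apply', finsetSum_coeff, ← C_eq_intCast, coeff_C_mul,
    coeff_prod_of_natDegree_le_sum _ _ _ fun i _ => h _ i, Matrix.of_apply]

lemma sum_rootMultiplicity_le_natDegree [IsDomain R] (p : R[X]) (s : Finset R) :
    ∑ x ∈ s, p.rootMultiplicity x ≤ p.natDegree := by
  classical
  calc ∑ x ∈ s, p.rootMultiplicity x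
      = ∑ x ∈ s, p.roots.count x := by simp only [count_roots]
    _ ≤ ∑ x ∈ s ∪ p.roots.toFinset, p.roots.count x :=
        Finset.sum_le_sum_of_subset Finset.subset_union_left
    _ = Multiset.card p.roots :=
        Multiset.sum_count_eq_card fun _ hx => Finset.mem_union_right _ (Multiset.mem_toFinset.2 hx)
    _ ≤ p.natDegree := card_roots' p

variable {n : ℕ}

def twistedWronskianMatrix (ω : Fin n → R) (a : Fin n → R[X]) : Matrix (Fin n) (Fin n) R[X] :=
  Matrix.of fun k i => (twistDeriv (ω i))^[k] (a i)

def twistedWronskian (ω : Fin n → R) (a : Fin n → R[X]) : R[X] :=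
  (twistedWronskianMatrix ω a).det

lemma natDegree_twistedWronskianMatrix_le (ω : Fin n → R) (a : Fin n → R[X]) (k i : Fin n) :
    (twistedWronskianMatrix ω a k i).natDegree ≤ (a i).natDegree :=
  natDegree_iterate_twistDeriv_le _ le_rfl _

lemma natDegree_twistedWronskian_le (ω : Fin n → R) (a : Fin n → R[X]) :
    (twistedWronskian ω a).natDegree ≤ ∑ i, (a i).natDegree :=
  natDegree_det_le_of_col _ _ (natDegree_twistedWronskianMatrix_le ω a)

lemma coeff_twistedWronskian (ω : Fin n → R) (a : Fin n → R[X]) :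
    (twistedWronskian ω a).coeff (∑ i, (a i).natDegree) =
      (∏ i, (a i).leadingCoeff) * (Matrix.vandermonde ω).det := by
  rw [twistedWronskian,
    coeff_det_of_natDegree_le_col _ _ (natDegree_twistedWronskianMatrix_le ω a),
    ← Matrix.det_transpose (Matrix.vandermonde ω), ← Matrix.det_mul_row]
  congr 1
  ext k i
  simp [twistedWronskianMatrix, coeff_iterate_twistDeriv _ le_rfl, Matrix.vandermonde, mul_comm]

lemma twistedWronskian_ne_zero [IsDomain R] {ω : Fin n → R} (hω : Function.Injective ω)
    {a : Fin n → R[X]} (ha : ∀ i, a i ≠ 0) : twistedWronskian ω a ≠ 0 := by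
  intro h
  have hcoeff := coeff_twistedWronskian ω a
  rw [h, coeff_zero] at hcoeff
  exact mul_ne_zero (Finset.prod_ne_zero_iff.2 fun i _ => leadingCoeff_ne_zero.2 (ha i))
    (Matrix.det_vandermonde_ne_zero_iff.2 hω) hcoeff.symm

end CommRing

lemma order_coe {R : Type*} [Semiring R] {p : R[X]} (hp : p ≠ 0) :
    (p : PowerSeries R).order = p.natTrailingDegree := by
  rw [PowerSeries.order_eq_nat]
  refine ⟨by simpa [coeff_coe] using coeff_natTrailingDegree_ne_zero.2 hp, fun i hi => ?_⟩
  simpa [coeff_coe] using coeff_eq_zero_of_lt_natTrailingDegree hi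

end Polynomial

namespace PowerSeries

lemma le_order_sum {R ι : Type*} [Semiring R] (s : Finset ι) (f : ι → R⟦X⟧) {c : ℕ∞}
    (h : ∀ i ∈ s, c ≤ (f i).order) : c ≤ (∑ i ∈ s, f i).order :=
  Finset.sum_induction f (fun g => c ≤ g.order)
    (fun _ _ hg hh => (le_min hg hh).trans (min_order_le_order_add _ _)) (by simp) h

section CommSemiring

variable {R : Type*} [CommSemiring R]

lemma order_le_order_derivative_add_one (f : R⟦X⟧) : f.order ≤ (d⁄dX R f).order + 1 := by
  by_cases hf : d⁄dX R f = 0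
  · simp [hf]
  · have hcoeff := coeff_order hf
    rw [coeff_derivative] at hcoeff
    calc f.order ≤ ((d⁄dX R f).order.toNat + 1 : ℕ) := order_le _ (left_ne_zero_of_mul hcoeff)
      _ = (d⁄dX R f).order + 1 := by rw [Nat.cast_add, coe_toNat_order hf, Nat.cast_one]

lemma order_le_order_iterate_derivative_add (f : R⟦X⟧) (k : ℕ) :
    f.order ≤ ((d⁄dX R)^[k] f).order + k := by
  induction k with
  | zero => simp
  | succ k ih =>
    calc f.order ≤ ((d⁄dX R)^[k] f).order + k := ih
      _ ≤ ((d⁄dX R)^[k + 1] f).order + 1 + k := by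
        rw [Function.iterate_succ_apply']
        gcongr
        exact order_le_order_derivative_add_one _
      _ = ((d⁄dX R)^[k + 1] f).order + (k + 1 : ℕ) := by push_cast; ring

lemma iterate_derivative_sum {ι : Type*} (s : Finset ι) (g : ι → R⟦X⟧) (k : ℕ) :
    (d⁄dX R)^[k] (∑ i ∈ s, g i) = ∑ i ∈ s, (d⁄dX R)^[k] (g i) := by
  simp_rw [← Derivation.coeFn_coe, ← Module.End.pow_apply, map_sum]

end CommSemiring

variable {R : Type*} [CommRing R] {n : ℕ}

lemma sum_le_order_det_add (B : Matrix (Fin n) (Fin n) R⟦X⟧) (c : Fin n → ℕ∞)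
    (h : ∀ k i, c i ≤ (B k i).order + (k : ℕ)) :
    ∑ i, c i ≤ B.det.order + (∑ k : Fin n, (k : ℕ) : ℕ) := by
  rw [Matrix.det_apply', ← tsub_le_iff_right]
  refine le_order_sum _ _ fun σ _ => tsub_le_iff_right.2 ?_
  calc ∑ i, c i ≤ ∑ i, ((B (σ i) i).order + (σ i : ℕ)) := Finset.sum_le_sum fun i _ => h _ i
    _ = ∑ i, (B (σ i) i).order + (∑ k : Fin n, (k : ℕ) : ℕ) := by
      rw [Finset.sum_add_distrib, Nat.cast_sum, Equiv.sum_comp σ fun k => ((k : ℕ) : ℕ∞)]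
    _ ≤ _ := by
      gcongr
      exact (le_order_prod _ _).trans (le_add_self.trans (le_order_mul _ _))

def wronskianMatrix (g : Fin n → R⟦X⟧) : Matrix (Fin n) (Fin n) R⟦X⟧ :=
  Matrix.of fun k i => (d⁄dX R)^[k] (g i)

def wronskian (g : Fin n → R⟦X⟧) : R⟦X⟧ := (wronskianMatrix g).det

lemma order_sum_add_sum_erase_le_order_wronskian (g : Fin n → R⟦X⟧) (i₀ : Fin n) :
    (∑ i, g i).order + ∑ i ∈ Finset.univ.erase i₀, (g i).order ≤
      (wronskian g).order + (∑ k : Fin n, (k : ℕ) : ℕ) := by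
  have hdet : ((wronskianMatrix g).updateCol i₀ fun k => (d⁄dX R)^[k] (∑ i, g i)).det =
      wronskian g := by
    simpa [wronskian, wronskianMatrix, iterate_derivative_sum] using
      (wronskianMatrix g).det_updateCol_sum i₀ 1
  rw [← hdet, ← Finset.sdiff_singleton_eq_erase, ← Finset.sum_update_of_mem (Finset.mem_univ i₀)]
  refine sum_le_order_det_add _ _ fun k i => ?_
  rcases eq_or_ne i i₀ with rfl | hi
  · simpa using order_le_order_iterate_derivative_add _ _
  · simpa [hi, wronskianMatrix] using order_le_order_iterate_derivative_add _ _

end PowerSeries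

namespace PGNF

open PowerSeries

def polyAtHom (α : ℂ) : Polynomial ℂ →+* PowerSeries ℂ :=
  Polynomial.coeToPowerSeries.ringHom.comp (Polynomial.taylorAlgHom α).toRingHom

lemma polyAtHom_apply (α : ℂ) (p : Polynomial ℂ) : polyAtHom α p = polyAt p α := by
  simp [polyAtHom, polyAt, Polynomial.taylor_apply]

lemma polyAt_C (c α : ℂ) : polyAt (Polynomial.C c) α = C c := by
  simp [polyAt]

lemma polyAt_ne_zero {p : Polynomial ℂ} (hp : p ≠ 0) (α : ℂ) : polyAt p α ≠ 0 := by
  simpa [polyAt, Polynomial.coe_eq_zero_iff, Polynomial.comp_X_add_C_eq_zero_iff] using hp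

lemma order_polyAt {p : Polynomial ℂ} (hp : p ≠ 0) (α : ℂ) :
    (polyAt p α).order = p.rootMultiplicity α := by
  rw [polyAt, Polynomial.order_coe (Polynomial.comp_X_add_C_ne_zero_iff.2 hp),
    Polynomial.rootMultiplicity_eq_natTrailingDegree]

lemma derivative_polyAt (p : Polynomial ℂ) (α : ℂ) :
    d⁄dX ℂ (polyAt p α) = polyAt (Polynomial.derivative p) α := by
  simp [polyAt, derivative_coe, Polynomial.derivative_comp]

lemma derivative_expAt (ω α : ℂ) : d⁄dX ℂ (expAt ω α) = C ω * expAt ω α := by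
  ext j
  have hfact : ((j + 1).factorial : ℂ) = (j + 1) * j.factorial := by
    push_cast [Nat.factorial_succ]
    ring
  have hj : (j.factorial : ℂ) ≠ 0 := Nat.cast_ne_zero.2 j.factorial_ne_zero
  simp only [expAt, coeff_derivative, coeff_smul, coeff_C_mul, coeff_mk, smul_eq_mul, hfact]
  field_simp
  ring

lemma order_expAt (ω α : ℂ) : (expAt ω α).order = 0 := by
  rw [← Order.lt_one_iff, lt_iff_not_ge, one_le_order_iff_constCoeff_eq_zero]
  simp [expAt, Complex.exp_ne_zero]

lemma iterate_derivative_polyAt_mul_expAt (p : Polynomial ℂ) (ω α : ℂ) (k : ℕ) :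
    (d⁄dX ℂ)^[k] (polyAt p α * expAt ω α) =
      polyAt ((Polynomial.twistDeriv ω)^[k] p) α * expAt ω α := by
  induction k with
  | zero => rfl
  | succ k ih =>
    rw [Function.iterate_succ_apply', ih, Function.iterate_succ_apply', Derivation.leibniz,
      derivative_expAt, derivative_polyAt, Polynomial.twistDeriv, ← polyAtHom_apply,
      ← polyAtHom_apply, ← polyAtHom_apply, map_add, map_mul]
    simp only [polyAtHom_apply, smul_eq_mul, polyAt_C]
    ring

lemma wronskian_polyAt_mul_expAt {n : ℕ} (ω : Fin n → ℂ) (a : Fin n → Polynomial ℂ) (α : ℂ) :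
    wronskian (fun i => polyAt (a i) α * expAt (ω i) α) =
      (∏ i, expAt (ω i) α) * polyAt (Polynomial.twistedWronskian ω a) α := by
  have hmat : wronskianMatrix (fun i => polyAt (a i) α * expAt (ω i) α) =
      Matrix.of fun k i => expAt (ω i) α *
        (Polynomial.twistedWronskianMatrix ω a).map (polyAtHom α) k i := by
    ext k i : 1
    simp only [wronskianMatrix, Polynomial.twistedWronskianMatrix, Matrix.of_apply,
      Matrix.map_apply, iterate_derivative_polyAt_mul_expAt, polyAtHom_apply]
    exact mul_comm _ _
  rw [wronskian, hmat, Matrix.det_mul_row, ← RingHom.mapMatrix_apply, ← RingHom.map_det,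
    polyAtHom_apply, Polynomial.twistedWronskian]

lemma order_wronskian_polyAt_mul_expAt {n : ℕ} (ω : Fin n → ℂ) (a : Fin n → Polynomial ℂ)
    (α : ℂ) (hD : Polynomial.twistedWronskian ω a ≠ 0) :
    (wronskian fun i => polyAt (a i) α * expAt (ω i) α).order =
      (Polynomial.twistedWronskian ω a).rootMultiplicity α := by
  rw [wronskian_polyAt_mul_expAt, order_mul, order_prod, order_polyAt hD]
  simp [order_expAt]

lemma absOrd_mul (g h : PowerSeries ℂ) : absOrd (g * h) = absOrd g * absOrd h := by
  rcases eq_or_ne g 0 with rfl | hg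
  · simp [absOrd]
  rcases eq_or_ne h 0 with rfl | hh
  · simp [absOrd]
  rw [absOrd, absOrd, absOrd, if_neg (mul_ne_zero hg hh), if_neg hg, if_neg hh, order_mul,
    ENat.toNat_add (order_eq_top.not.2 hg) (order_eq_top.not.2 hh), ← Real.exp_add]
  push_cast
  ring_nf

lemma absOrd_prod {ι : Type*} (s : Finset ι) (g : ι → PowerSeries ℂ) :
    absOrd (∏ i ∈ s, g i) = ∏ i ∈ s, absOrd (g i) :=
  map_prod (⟨⟨absOrd, by simp [absOrd]⟩, absOrd_mul⟩ : PowerSeries ℂ →* ℝ) g s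

lemma absOrd_ne_zero {g : PowerSeries ℂ} (hg : g ≠ 0) : absOrd g ≠ 0 := by
  simp [absOrd, hg, Real.exp_ne_zero]

lemma exp_neg_le_absOrd {g : PowerSeries ℂ} {c : ℕ} (h : g.order ≤ c) :
    Real.exp (-c) ≤ absOrd g := by
  have hg : g ≠ 0 := by
    rintro rfl
    simp at h
  rw [absOrd, if_neg hg, Real.exp_le_exp, neg_le_neg_iff, Nat.cast_le]
  exact ENat.toNat_le_of_le_natCast h

def localFactor {n : ℕ} (ω : Fin n → ℂ) (a : Fin n → Polynomial ℂ) (α : ℂ) : ℝ :=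
  (⨆ i, absOrd (polyAt (a i) α))⁻¹ * (∏ i, absOrd (polyAt (a i) α)) *
    absOrd (∑ i, polyAt (a i) α * expAt (ω i) α)

lemma exp_neg_le_localFactor {n : ℕ} [NeZero n] (ω : Fin n → ℂ) {a : Fin n → Polynomial ℂ}
    (ha : ∀ i, a i ≠ 0) (α : ℂ) (hD : Polynomial.twistedWronskian ω a ≠ 0) :
    Real.exp (-((Polynomial.twistedWronskian ω a).rootMultiplicity α +
      ∑ k : Fin n, (k : ℕ) : ℕ)) ≤ localFactor ω a α := by
  obtain ⟨i₀, hi₀⟩ := exists_eq_ciSup_of_finite (f := fun i => absOrd (polyAt (a i) α))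
  rw [localFactor, ← hi₀, ← Finset.mul_prod_erase _ _ (Finset.mem_univ i₀),
    inv_mul_cancel_left₀ (absOrd_ne_zero (polyAt_ne_zero (ha i₀) α)), ← absOrd_prod,
    ← absOrd_mul]
  apply exp_neg_le_absOrd
  rw [order_mul, order_prod, add_comm, Nat.cast_add, ← order_wronskian_polyAt_mul_expAt ω a α hD]
  simpa only [order_mul, order_expAt, add_zero] using
    order_sum_add_sum_erase_le_order_wronskian (fun i => polyAt (a i) α * expAt (ω i) α) i₀

lemma sum_fin_val_eq (n : ℕ) : ∑ k : Fin n, ((k : ℕ) : ℝ) = n * (n - 1) / 2 := by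
  induction n with
  | zero => simp
  | succ m ih =>
    rw [Fin.sum_univ_castSucc]
    simp only [Fin.val_castSucc, ih, Fin.val_last]
    push_cast
    ring

theorem statement17_general {n s : ℕ} (hn : 1 ≤ n)
    (ω : Fin n → ℂ) (hω : Function.Injective ω)
    (α : Fin s → ℂ) (hα : Function.Injective α)
    (a : Fin n → Polynomial ℂ) (ha : ∀ i, a i ≠ 0) :
    ((Real.exp ((n * (n - 1) : ℝ) / 2))⁻¹) ^ s ≤
      (∏ i, Real.exp ((a i).natDegree : ℝ)) *
      ∏ j, ((⨆ i, absOrd (polyAt (a i) (α j)))⁻¹ *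
            (∏ i, absOrd (polyAt (a i) (α j))) *
            absOrd (∑ i, polyAt (a i) (α j) * expAt (ω i) (α j))) := by
  have : NeZero n := ⟨by omega⟩
  set D := Polynomial.twistedWronskian ω a
  have hD : D ≠ 0 := Polynomial.twistedWronskian_ne_zero hω ha
  have hroots : ∑ j, (D.rootMultiplicity (α j) : ℝ) ≤ ∑ i, ((a i).natDegree : ℝ) := by
    have h := (D.sum_rootMultiplicity_le_natDegree (Finset.univ.image α)).trans
      (Polynomial.natDegree_twistedWronskian_le ω a)
    rw [Finset.sum_image fun _ _ _ _ hxy => hα hxy] at h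
    exact_mod_cast h
  calc ((Real.exp ((n * (n - 1) : ℝ) / 2))⁻¹) ^ s
      ≤ Real.exp (∑ i, ((a i).natDegree : ℝ)) *
          ∏ j, Real.exp (-((D.rootMultiplicity (α j) + ∑ k : Fin n, (k : ℕ) : ℕ) : ℝ)) := by
        rw [← Real.exp_neg, ← Real.exp_nat_mul, ← Real.exp_sum, ← Real.exp_add, Real.exp_le_exp]
        push_cast
        rw [Finset.sum_neg_distrib, Finset.sum_add_distrib, sum_fin_val_eq]
        simp only [Finset.sum_const, Finset.card_univ, Fintype.card_fin, nsmul_eq_mul]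
        linarith
    _ ≤ (∏ i, Real.exp ((a i).natDegree : ℝ)) * ∏ j, localFactor ω a (α j) := by
        rw [Real.exp_sum]
        gcongr with j
        exact exp_neg_le_localFactor ω ha (α j) hD

/-- STATEMENT 17: the adelic estimate (Theorem 6.1). -/
theorem statement17 {n s : ℕ} (hn : 1 ≤ n) (hs : 1 ≤ s)
    (ω : Fin n → ℂ) (hω : Function.Injective ω)
    (α : Fin s → ℂ) (hα : Function.Injective α)
    (a : Fin n → Polynomial ℂ) (ha : ∀ i, a i ≠ 0) :
    ((Real.exp ((n * (n - 1) : ℝ) / 2))⁻¹) ^ s ≤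
      (∏ i, Real.exp ((a i).natDegree : ℝ)) *
      ∏ j, ((⨆ i, absOrd (polyAt (a i) (α j)))⁻¹ *
            (∏ i, absOrd (polyAt (a i) (α j))) *
            absOrd (∑ i, polyAt (a i) (α j) * expAt (ω i) (α j))) :=
  statement17_general hn ω hω α hα a ha

end PGNF
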